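/- arXiv:2506.12002 — 2 statements merged into one kernel-verified Lean document; each statement's English description precedes it below -/
import Mathlib

section
/- Cauchy's theorem for group manifolds: if f is holomorphic on a domain D in G^ℂ and Σ, Σ′ are oriented real N-dimensional submanifolds of D with common boundary bounding a region R (∂R = Σ′ − Σ), then ∫_Σ (dU) f(U) = ∫_{Σ′} (dU) f(U). -/
/-!
The form `(dU) f` is closed. Both `d(dU)` and `(dU) ∧ df` are sums of products of `N + 1` of the
anticommuting, square-zero one-forms `θ a` (by the Maurer–Cartan equation and `df = θ^a D_a f`), and
such a product repeats a factor, so it vanishes. Stokes' theorem then makes the two integrals agree.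
-/

section AnticommutingProducts

variable {ι R : Type*} [Ring R] {θ : ι → R}

theorem mul_prod_map_eq_zero_of_mem (hanti : ∀ a b, θ a * θ b = -(θ b * θ a))
    (hsq : ∀ a, θ a * θ a = 0) {a : ι} {l : List ι} (ha : a ∈ l) :
    θ a * (l.map θ).prod = 0 := by
  induction l with
  | nil => simp at ha
  | cons b t ih =>
    rw [List.map_cons, List.prod_cons, ← mul_assoc]
    rcases List.mem_cons.mp ha with rfl | ha
    · rw [hsq, zero_mul]
    · rw [hanti, neg_mul, mul_assoc, ih ha, mul_zero, neg_zero]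

theorem prod_map_eq_zero_of_not_nodup (hanti : ∀ a b, θ a * θ b = -(θ b * θ a))
    (hsq : ∀ a, θ a * θ a = 0) {l : List ι} (hl : ¬ l.Nodup) : (l.map θ).prod = 0 := by
  induction l with
  | nil => exact absurd List.nodup_nil hl
  | cons b t ih =>
    rw [List.map_cons, List.prod_cons]
    by_cases hb : b ∈ t
    · exact mul_prod_map_eq_zero_of_mem hanti hsq hb
    · rw [ih fun ht => hl (List.nodup_cons.mpr ⟨hb, ht⟩), mul_zero]

theorem prod_map_eq_zero_of_card_lt_length [Fintype ι] (hanti : ∀ a b, θ a * θ b = -(θ b * θ a))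
    (hsq : ∀ a, θ a * θ a = 0) {l : List ι} (hl : Fintype.card ι < l.length) :
    (l.map θ).prod = 0 :=
  prod_map_eq_zero_of_not_nodup hanti hsq fun hnd => hl.not_ge hnd.length_le_card

theorem prod_ofFn_mul_eq_zero {N : ℕ} {θ : Fin N → R} (hanti : ∀ a b, θ a * θ b = -(θ b * θ a))
    (hsq : ∀ a, θ a * θ a = 0) (a : Fin N) : (List.ofFn θ).prod * θ a = 0 := by
  have h := prod_map_eq_zero_of_card_lt_length hanti hsq (l := List.finRange N ++ [a]) (by simp)
  rwa [List.map_append, List.prod_append, ← List.ofFn_eq_map, List.map_singleton,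
    List.prod_singleton] at h

end AnticommutingProducts

section MaurerCartan

variable {K Ω ι : Type*} [CommSemiring K] [Ring Ω] [Algebra K Ω] [Fintype ι] {θ : ι → Ω}

theorem mul_mul_eq_zero_of_mem_span_quadratic (hanti : ∀ a b, θ a * θ b = -(θ b * θ a))
    (hsq : ∀ a, θ a * θ a = 0) {l m : List ι} (hlm : Fintype.card ι < m.length + l.length + 2)
    {x : Ω} (hx : x ∈ Submodule.span K (Set.range fun p : ι × ι => θ p.1 * θ p.2)) :
    (m.map θ).prod * x * (l.map θ).prod = 0 := by
  induction hx using Submodule.span_induction with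
  | mem y hy =>
    obtain ⟨⟨b, c⟩, rfl⟩ := hy
    have h := prod_map_eq_zero_of_card_lt_length hanti hsq (l := m ++ b :: c :: l) (by simp; omega)
    simpa [List.prod_append, mul_assoc] using h
  | zero => simp
  | add y z _ _ hy hz => rw [mul_add, add_mul, hy, hz, add_zero]
  | smul c y _ hy => rw [mul_smul_comm, smul_mul_assoc, hy, smul_zero]

/-- The derivative of a product of the `θ`'s is a sum of products with one more `θ`; the
left factor `m` accounts for the `θ`'s already peeled off by the Leibniz rule. -/
theorem mul_deriv_prod_map_eq_zero (hanti : ∀ a b, θ a * θ b = -(θ b * θ a))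
    (hsq : ∀ a, θ a * θ a = 0) {d : Ω → Ω} (hone : d 1 = 0)
    (hdθ : ∀ a, d (θ a) ∈ Submodule.span K (Set.range fun p : ι × ι => θ p.1 * θ p.2))
    (hLeib : ∀ a y, d (θ a * y) = d (θ a) * y - θ a * d y) (l : List ι) :
    ∀ m : List ι, Fintype.card ι < m.length + l.length + 1 →
      (m.map θ).prod * d (l.map θ).prod = 0 := by
  induction l with
  | nil => simp [hone]
  | cons a t ih =>
    intro m hlm
    have hquad := mul_mul_eq_zero_of_mem_span_quadratic hanti hsq
      (l := t) (m := m) (by simp at hlm; omega) (hdθ a)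
    have hrest := ih (m ++ [a]) (by simp at hlm ⊢; omega)
    rw [List.map_append, List.prod_append, List.map_singleton, List.prod_singleton] at hrest
    rw [List.map_cons, List.prod_cons, hLeib, mul_sub, ← mul_assoc, ← mul_assoc, hquad, hrest,
      sub_zero]

theorem deriv_prod_ofFn_eq_zero {N : ℕ} {θ : Fin N → Ω} (hanti : ∀ a b, θ a * θ b = -(θ b * θ a))
    (hsq : ∀ a, θ a * θ a = 0) {d : Ω → Ω} (hone : d 1 = 0)
    (hdθ : ∀ a, d (θ a) ∈ Submodule.span K (Set.range fun p : Fin N × Fin N => θ p.1 * θ p.2))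
    (hLeib : ∀ a y, d (θ a * y) = d (θ a) * y - θ a * d y) : d (List.ofFn θ).prod = 0 := by
  have h := mul_deriv_prod_map_eq_zero hanti hsq hone hdθ hLeib (List.finRange N) [] (by simp)
  rwa [List.map_nil, List.prod_nil, one_mul, ← List.ofFn_eq_map] at h

end MaurerCartan

theorem stmt5_general {N : ℕ} {Ω : Type*} [Ring Ω] [Algebra ℂ Ω]
    {Surf Reg : Type*}
    (θ : Fin N → Ω) (C : Fin N → Fin N → Fin N → ℝ)
    (hanti : ∀ a b, θ a * θ b = -(θ b * θ a))
    (hsq : ∀ a, θ a * θ a = 0)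
    (d : Ω →ₗ[ℂ] Ω)
    (hone : d 1 = 0)
    (hdθ : ∀ a, d (θ a) = (1/2 : ℂ) • ∑ b, ∑ c, (C b c a : ℂ) • (θ b * θ c))
    (hLeib : ∀ a y, d (θ a * y) = d (θ a) * y - θ a * d y)
    (f : Ω) (Df : Fin N → Ω)
    (hdf : d f = ∑ a, θ a * Df a)
    (hLeibN : d ((List.ofFn θ).prod * f)
      = d ((List.ofFn θ).prod) * f + ((-1 : ℂ) ^ N) • ((List.ofFn θ).prod * d f))
    (IntS : Surf → Ω →ₗ[ℂ] ℂ) (IntR : Reg → Ω →ₗ[ℂ] ℂ)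
    (bdry : Reg → Surf → Surf → Prop)
    (hStokes : ∀ R S' S, bdry R S' S → ∀ ω : Ω, IntS S' ω - IntS S ω = IntR R (d ω)) :
    ∀ R S' S, bdry R S' S →
      IntS S' ((List.ofFn θ).prod * f) = IntS S ((List.ofFn θ).prod * f) := by
  have hdθ_mem (a : Fin N) :
      d (θ a) ∈ Submodule.span ℂ (Set.range fun p : Fin N × Fin N => θ p.1 * θ p.2) := by
    rw [hdθ a]
    exact Submodule.smul_mem _ _ <| Submodule.sum_mem _ fun b _ => Submodule.sum_mem _ fun c _ =>
      Submodule.smul_mem _ _ <| Submodule.subset_span ⟨(b, c), rfl⟩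
  have hclosed : d ((List.ofFn θ).prod * f) = 0 := by
    rw [hLeibN, deriv_prod_ofFn_eq_zero hanti hsq hone hdθ_mem hLeib, zero_mul, zero_add, hdf,
      Finset.mul_sum]
    simp only [← mul_assoc, prod_ofFn_mul_eq_zero hanti hsq, zero_mul, Finset.sum_const_zero,
      smul_zero]
  intro R S' S hRS
  rw [← sub_eq_zero, hStokes R S' S hRS, hclosed, map_zero]

/-- Cauchy's theorem for group manifolds: if `f` is holomorphic on a domain in
`G^ℂ` and `S'`, `S` are oriented real `N`-dimensional submanifolds with common
boundary bounding a region `R` (`∂R = S' − S`), then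
`∫_{S'} (dU) f = ∫_{S} (dU) f`.  The differential-geometric data is modelled
abstractly: `Ω` is the `ℂ`-algebra of forms, with anticommuting square-zero
one-forms `θ a`, a linear exterior derivative `d` obeying the Maurer–Cartan
equation and Leibniz rule, a "function" (zero-form) `f` with
`d f = θ^a (D_a f)` for zero-forms `Df a` commuting with the `θ`'s, linear
integration maps over surfaces and regions, and Stokes' theorem relating them
through the boundary relation `bdry R S' S` (meaning `∂R = S' − S`). -/
theorem stmt5 {N : ℕ} {Ω : Type*} [Ring Ω] [Algebra ℂ Ω]
    {Surf Reg : Type*}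
    (θ : Fin N → Ω) (C : Fin N → Fin N → Fin N → ℝ)
    (hanti : ∀ a b, θ a * θ b = -(θ b * θ a))
    (hsq : ∀ a, θ a * θ a = 0)
    (d : Ω →ₗ[ℂ] Ω)
    (hone : d 1 = 0)
    (hdθ : ∀ a, d (θ a) = (1/2 : ℂ) • ∑ b, ∑ c, (C b c a : ℂ) • (θ b * θ c))
    (hLeib : ∀ a y, d (θ a * y) = d (θ a) * y - θ a * d y)
    (f : Ω) (Df : Fin N → Ω)
    (hdf : d f = ∑ a, θ a * Df a)
    (hDfcomm : ∀ a b, θ a * Df b = Df b * θ a)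
    (hLeibN : d ((List.ofFn θ).prod * f)
      = d ((List.ofFn θ).prod) * f + ((-1 : ℂ) ^ N) • ((List.ofFn θ).prod * d f))
    (IntS : Surf → Ω →ₗ[ℂ] ℂ) (IntR : Reg → Ω →ₗ[ℂ] ℂ)
    (bdry : Reg → Surf → Surf → Prop)
    (hStokes : ∀ R S' S, bdry R S' S → ∀ ω : Ω, IntS S' ω - IntS S ω = IntR R (d ω)) :
    ∀ R S' S, bdry R S' S →
      IntS S' ((List.ofFn θ).prod * f) = IntS S ((List.ofFn θ).prod * f) :=
  stmt5_general θ C hanti hsq d hone hdθ hLeib f Df hdf hLeibN IntS IntR bdry hStokes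
end

section
/- If a tangent vector v evolves by v̇ = (Hv)† + [ξ, v] and a normal vector n evolves by ṅ = −(H^T n)† − [ξ†, n], then d/dt (tr n† v) = −2i Im tr(n (Hv)), which is purely imaginary; consequently ⟨n, v⟩ := Re tr(n† v) is constant along the flow, so ⟨n₀, v₀⟩ = 0 implies ⟨n, v⟩ = 0 for all times. -/
open Matrix

attribute [local instance] Matrix.normedAddCommGroup Matrix.normedSpace

/-!
By the product rule, `d/dt tr(n† v) = tr(ṅ† v) + tr(n† v̇)`. The two commutator terms add
up to the trace of the commutator `[ξ, n† v]`, which vanishes. Of the remaining terms, `tr(n† (Hv)†)` is the complex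
conjugate of `tr(n (Hv))`, and `tr((Hᵀn) v) = tr(n (Hv))` by the transpose identity, so the
derivative is `conj z - z = -2i Im z` with `z = tr(n (Hv))`. Its real part vanishes, hence
`Re tr(n† v)` is constant in time.
-/

namespace Matrix

variable {ι : Type*} [Fintype ι]

noncomputable def traceMulCLM : Matrix ι ι ℂ →L[ℝ] Matrix ι ι ℂ →L[ℝ] ℂ :=
  ((LinearMap.mul ℝ (Matrix ι ι ℂ)).compr₂ (traceLinearMap ι ℝ ℂ)).toContinuousBilinearMap

theorem _root_.HasDerivAt.trace_conjTranspose_mul {a b : ℝ → Matrix ι ι ℂ} {a' b' : Matrix ι ι ℂ}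
    {t : ℝ} (ha : HasDerivAt a a' t) (hb : HasDerivAt b b' t) :
    HasDerivAt (fun s => trace ((a s)ᴴ * b s)) (trace (a'ᴴ * b t) + trace ((a t)ᴴ * b')) t := by
  rw [add_comm]
  exact traceMulCLM.hasDerivAt_of_bilinear (fun _ => ha.star) (fun _ => hb)

theorem trace_flow_pairing (ξ n w p q : Matrix ι ι ℂ) (h : trace (p * w) = trace (n * q)) :
    trace ((-pᴴ - (ξᴴ * n - n * ξᴴ))ᴴ * w) + trace (nᴴ * (qᴴ + (ξ * w - w * ξ)))
      = -(2 * Complex.I * ((trace (n * q)).im : ℂ)) := by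
  have hconj : trace (nᴴ * qᴴ) = starRingEnd ℂ (trace (n * q)) := by
    rw [← conjTranspose_mul, trace_conjTranspose, trace_mul_comm, Complex.star_def]
  have hcomm := LieAlgebra.matrix_trace_commutator_zero ι ℂ ξ (nᴴ * w)
  rw [Ring.lie_def] at hcomm
  have hsub := Complex.sub_conj (trace (n * q))
  simp only [conjTranspose_sub, conjTranspose_neg, conjTranspose_mul, conjTranspose_conjTranspose,
    Matrix.mul_add, Matrix.mul_sub, Matrix.sub_mul, Matrix.neg_mul, trace_add, trace_sub, trace_neg,
    Matrix.mul_assoc] at hcomm ⊢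
  rw [hconj, h]
  push_cast at hsub
  linear_combination -hsub + hcomm

end Matrix

theorem Complex.re_eq_of_forall_hasDerivAt_re_eq_zero {f f' : ℝ → ℂ}
    (hf : ∀ t, HasDerivAt f (f' t) t) (hre : ∀ t, (f' t).re = 0) (s t : ℝ) :
    (f s).re = (f t).re := by
  have hre_deriv (t : ℝ) : HasDerivAt (fun s => (f s).re) 0 t := by
    simpa [hre t, Function.comp_def] using reCLM.hasFDerivAt.comp_hasDerivAt t (hf t)
  exact is_const_of_deriv_eq_zero (fun t => (hre_deriv t).differentiableAt)
    (fun t => (hre_deriv t).deriv) s t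

/-- If a tangent vector evolves by `v̇ = (Hv)† + [ξ, v]` and a normal vector by
`ṅ = -(H^T n)† - [ξ†, n]`, where `H`, `Hᵀ` are ℝ-linear maps related by
`tr((H^T a) b) = tr(a (H b))`, then
`d/dt tr(n† v) = -2i Im tr(n (Hv))` (purely imaginary), so
`⟨n, v⟩ = Re tr(n† v)` is constant along the flow: `⟨n₀, v₀⟩ = 0` implies
`⟨n, v⟩ = 0` for all times. -/
theorem stmt7 {m : ℕ}
    (H HT : Matrix (Fin m) (Fin m) ℂ →ₗ[ℝ] Matrix (Fin m) (Fin m) ℂ)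
    (htrans : ∀ a b, Matrix.trace (HT a * b) = Matrix.trace (a * H b))
    (ξ : Matrix (Fin m) (Fin m) ℂ)
    (v nv : ℝ → Matrix (Fin m) (Fin m) ℂ)
    (hv : ∀ t, HasDerivAt v ((H (v t))ᴴ + (ξ * v t - v t * ξ)) t)
    (hn : ∀ t, HasDerivAt nv (-(HT (nv t))ᴴ - (ξᴴ * nv t - nv t * ξᴴ)) t) :
    (∀ t, HasDerivAt (fun t => Matrix.trace ((nv t)ᴴ * v t))
        (-(2 * Complex.I * ((Matrix.trace (nv t * H (v t))).im : ℂ))) t) ∧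
    ((Matrix.trace ((nv 0)ᴴ * v 0)).re = 0 →
      ∀ t, (Matrix.trace ((nv t)ᴴ * v t)).re = 0) := by
  have hderiv (t : ℝ) : HasDerivAt (fun t => trace ((nv t)ᴴ * v t))
      (-(2 * Complex.I * ((trace (nv t * H (v t))).im : ℂ))) t := by
    rw [← trace_flow_pairing ξ (nv t) (v t) _ _ (htrans (nv t) (v t))]
    exact (hn t).trace_conjTranspose_mul (hv t)
  refine ⟨hderiv, fun h0 t => ?_⟩
  rw [Complex.re_eq_of_forall_hasDerivAt_re_eq_zero hderiv (fun _ => by simp) t 0, h0]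
end
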